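/- Suppose the noise transition matrix T is row-diagonally dominant, i.e., for every class i and every j ≠ i one has T i j < T i i. If a measurable classifier f : X → Fin c disagrees with the target concept on a set of positive measure, i.e., μ {x : f x ≠ f* x} > 0, then its expected 0-1 loss on the noisy distribution is strictly larger than that of f*: ν {(x, y) : f* x ≠ y} < ν {(x, y) : f x ≠ y}, where ν is the noisy joint distribution. -/

import Mathlib

open MeasureTheory
open scoped ENNReal

/-! Under the noisy distribution the observed label of `x` is `j` with probability
`T (f* x) j`, so a classifier `g` is correct with probability `∫ T (f* x) (g x) dμ`.
Diagonal dominance makes this integrand maximal at `g = f*` pointwise, strictly wherever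
`g x ≠ f* x`; since the 0-1 loss is one minus the accuracy, `f*` has strictly smaller loss. -/

section LabelNoise

variable {X ι : Type*} [MeasurableSpace X] [Fintype ι]

theorem isProbabilityMeasure_sum_smul_dirac {Y : Type*} [MeasurableSpace Y] {w : ι → ℝ≥0∞}
    (hw : ∑ j, w j = 1) (a : ι → Y) :
    IsProbabilityMeasure (∑ j, w j • Measure.dirac (a j)) :=
  ⟨by simp [hw]⟩

variable [MeasurableSpace ι]

theorem measurable_sum_smul_dirac_prodMk {w : X → ι → ℝ≥0∞}
    (hw : ∀ j, Measurable fun x => w x j) :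
    Measurable fun x => ∑ j, w x j • Measure.dirac (x, j) := by
  refine Measure.measurable_of_measurable_coe _ fun s hs => ?_
  simp only [Measure.coe_finsetSum, Measure.coe_smul, Finset.sum_apply, Pi.smul_apply,
    smul_eq_mul, Measure.dirac_apply' _ hs]
  exact Finset.measurable_sum _ fun j _ =>
    (hw j).mul ((measurable_one.indicator hs).comp (measurable_id.prodMk measurable_const))

variable [MeasurableSingletonClass ι]

theorem measurableSet_setOf_apply_fst_eq_snd {g : X → ι} (hg : Measurable g) :
    MeasurableSet {p : X × ι | g p.1 = p.2} :=
  measurableSet_eq_fun (hg.comp measurable_fst) measurable_snd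

theorem sum_smul_dirac_apply_setOf_apply_fst_eq_snd (w : ι → ℝ≥0∞) {g : X → ι}
    (hg : Measurable g) (x : X) :
    (∑ j, w j • Measure.dirac (x, j)) {p : X × ι | g p.1 = p.2} = w (g x) := by
  classical
  simp [Measure.dirac_apply' _ (measurableSet_setOf_apply_fst_eq_snd hg), Set.indicator_apply]

theorem bind_sum_smul_dirac_apply_setOf_apply_fst_eq_snd (μ : Measure X)
    {w : X → ι → ℝ≥0∞} (hw : ∀ j, Measurable fun x => w x j) {g : X → ι} (hg : Measurable g) :
    μ.bind (fun x => ∑ j, w x j • Measure.dirac (x, j)) {p : X × ι | g p.1 = p.2}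
      = ∫⁻ x, w x (g x) ∂μ := by
  rw [Measure.bind_apply (measurableSet_setOf_apply_fst_eq_snd hg)
    (measurable_sum_smul_dirac_prodMk hw).aemeasurable]
  simp only [sum_smul_dirac_apply_setOf_apply_fst_eq_snd _ hg]

end LabelNoise

theorem lintegral_lt_lintegral_of_forall_ne_lt {X ι : Type*} [MeasurableSpace X]
    {μ : Measure X} {w : X → ι → ℝ≥0∞} {g k : X → ι} (hk : Measurable fun x => w x (k x))
    (hfin : ∫⁻ x, w x (g x) ∂μ ≠ ∞) (hdom : ∀ x j, j ≠ k x → w x j < w x (k x))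
    (hne : μ {x | g x ≠ k x} ≠ 0) :
    ∫⁻ x, w x (g x) ∂μ < ∫⁻ x, w x (k x) ∂μ := by
  have hle : ∀ x, w x (g x) ≤ w x (k x) := fun x => by
    by_cases h : g x = k x
    · rw [h]
    · exact (hdom x _ h).le
  exact lintegral_strict_mono_of_ae_le_of_ae_lt_on hk.aemeasurable hfin (ae_of_all _ hle) hne
    (ae_of_all _ fun x => hdom x _)

theorem target_concept_strictly_minimizes_expected_01_loss_general
    {X : Type*} [MeasurableSpace X] (μ : Measure X) [IsProbabilityMeasure μ]
    (c : ℕ)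
    (fstar : X → Fin c) (hfstar : Measurable fstar)
    (T : Fin c → Fin c → ℝ)
    (hT0 : ∀ i j, 0 ≤ T i j) (hT1 : ∀ i, ∑ j, T i j = 1)
    (hdom : ∀ i j, j ≠ i → T i j < T i i)
    (ν : Measure (X × Fin c))
    (hν : ν = μ.bind (fun x => ∑ j, ENNReal.ofReal (T (fstar x) j) • Measure.dirac (x, j)))
    (f : X → Fin c) (hf : Measurable f)
    (hdisagree : 0 < μ {x : X | f x ≠ fstar x}) :
    ν {p : X × Fin c | fstar p.1 ≠ p.2} < ν {p : X × Fin c | f p.1 ≠ p.2} := by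
  have hw : ∀ j, Measurable fun x => ENNReal.ofReal (T (fstar x) j) := fun j =>
    (measurable_of_finite fun i => ENNReal.ofReal (T i j)).comp hfstar
  have hw1 : ∀ x, ∑ j, ENNReal.ofReal (T (fstar x) j) = 1 := fun x => by
    rw [← ENNReal.ofReal_sum_of_nonneg fun j _ => hT0 _ j, hT1, ENNReal.ofReal_one]
  have : IsProbabilityMeasure ν := hν ▸ isProbabilityMeasure_bind
    (measurable_sum_smul_dirac_prodMk hw).aemeasurable
    (ae_of_all _ fun x => isProbabilityMeasure_sum_smul_dirac (hw1 x) (x, ·))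
  have hacc : ∀ g : X → Fin c, Measurable g →
      ν {p | g p.1 = p.2} = ∫⁻ x, ENNReal.ofReal (T (fstar x) (g x)) ∂μ := fun g hg =>
    hν ▸ bind_sum_smul_dirac_apply_setOf_apply_fst_eq_snd μ hw hg
  have hlt : ν {p | f p.1 = p.2} < ν {p | fstar p.1 = p.2} := by
    rw [hacc f hf, hacc fstar hfstar]
    refine lintegral_lt_lintegral_of_forall_ne_lt
      (w := fun x j => ENNReal.ofReal (T (fstar x) j))
      ((measurable_of_finite fun i => ENNReal.ofReal (T i i)).comp hfstar)
      (hacc f hf ▸ measure_ne_top _ _)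
      (fun x j hj => ENNReal.ofReal_lt_ofReal_iff_of_nonneg (hT0 _ _) |>.2 (hdom _ _ hj))
      hdisagree.ne'
  calc ν {p | fstar p.1 ≠ p.2} = ν {p | fstar p.1 = p.2}ᶜ := rfl
    _ < 1 - ν {p | f p.1 = p.2} :=
      prob_compl_lt_one_sub_of_lt_prob hlt (measurableSet_setOf_apply_fst_eq_snd hfstar)
    _ = ν {p | f p.1 ≠ p.2} := (prob_compl_eq_one_sub
      (measurableSet_setOf_apply_fst_eq_snd hf)).symm

/-- If the noise transition matrix `T` is row-diagonally dominant and
the classifier `f` disagrees with the target concept `fstar` on a set of positive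
`μ`-measure, then the expected 0-1 loss of `f` on the noisy joint distribution
`ν = μ ⊗ κ` is strictly larger than that of `fstar`. -/
theorem target_concept_strictly_minimizes_expected_01_loss
    {X : Type*} [MeasurableSpace X] (μ : Measure X) [IsProbabilityMeasure μ]
    (c : ℕ) (hc : 1 ≤ c)
    (fstar : X → Fin c) (hfstar : Measurable fstar)
    (T : Fin c → Fin c → ℝ)
    (hT0 : ∀ i j, 0 ≤ T i j) (hT1 : ∀ i, ∑ j, T i j = 1)
    (hdom : ∀ i j, j ≠ i → T i j < T i i)
    (ν : Measure (X × Fin c))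
    (hν : ν = μ.bind (fun x => ∑ j, ENNReal.ofReal (T (fstar x) j) • Measure.dirac (x, j)))
    (f : X → Fin c) (hf : Measurable f)
    (hdisagree : 0 < μ {x : X | f x ≠ fstar x}) :
    ν {p : X × Fin c | fstar p.1 ≠ p.2} < ν {p : X × Fin c | f p.1 ≠ p.2} :=
  target_concept_strictly_minimizes_expected_01_loss_general μ c fstar hfstar T hT0 hT1 hdom ν hν f
    hf hdisagree
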